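/- Let F(x,y,p,d) = Σ_{n,k≥0} Σ_{π ∈ C_{n,k}} x^n y^k p^{sv(π)} d^{dsv(π)} ∈ ℚ[[x,y,p,d]], and for a positive integer a let F_a(x,y,p,d) = Σ_{n,k≥1} Σ_{π ∈ C_{n,k} with first part π₁ = a} x^n y^k p^{sv(π)} d^{dsv(π)}. Then F_a · (1 − y²·x^a·Σ_{j=1}^{a−1} x^j·(p·d^{a−j} − 1)) = x^a·y·F. -/

import Mathlib

/-- The indices (0-based) of symmetric valleys of a list of naturals:
`i` is a symmetric valley if `L i > L (i+1)` and `L i = L (i+2)`. -/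
def symValleyIdx (L : List ℕ) : Finset ℕ :=
  (Finset.range L.length).filter (fun i =>
    i + 2 < L.length ∧ L.getD i 0 > L.getD (i+1) 0 ∧ L.getD i 0 = L.getD (i+2) 0)

/-- `sv π`: the number of symmetric valleys of `π`. -/
def svL (L : List ℕ) : ℕ := (symValleyIdx L).card

/-- `dsv π`: the sum of the depths of the symmetric valleys of `π`. -/
def dsvL (L : List ℕ) : ℕ := ∑ i ∈ symValleyIdx L, (L.getD i 0 - L.getD (i+1) 0)

/-- Variables: `X 0 = x`, `X 1 = y`, `X 2 = p`, `X 3 = d`. -/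
noncomputable abbrev Xv : Fin 4 → MvPowerSeries (Fin 4) ℚ := MvPowerSeries.X

/-- `F(x,y,p,d) = Σ_{n,k≥0} Σ_{π ∈ C_{n,k}} x^n y^k p^{sv(π)} d^{dsv(π)}`. -/
noncomputable def Fdsv : MvPowerSeries (Fin 4) ℚ := fun m =>
  ((Finset.univ : Finset (Composition (m 0))).filter (fun c =>
    c.length = m 1 ∧ svL c.blocks = m 2 ∧ dsvL c.blocks = m 3)).card

/-- `F_a(x,y,p,d)`: as `F`, but restricted to compositions whose first part equals `a`
(such compositions automatically have `n, k ≥ 1`). -/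
noncomputable def FdsvA (a : ℕ) : MvPowerSeries (Fin 4) ℚ := fun m =>
  ((Finset.univ : Finset (Composition (m 0))).filter (fun c =>
    c.blocks.head? = some a ∧
    c.length = m 1 ∧ svL c.blocks = m 2 ∧ dsvL c.blocks = m 3)).card

/-!
Weight a composition `σ` by `x^{|σ|} y^{ℓ(σ)} p^{sv σ} d^{dsv σ}`. Prepending a part `b` multiplies
the weight by `x^b y`, and additionally by `p d^{b-j}` exactly when `σ` starts with `j, b` for some
`j < b`, since that creates one new symmetric valley, of depth `b - j`, at the front. Split the
compositions according to whether they start with some `j, a` with `0 < j < a`, and let `G` count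
those that do not. Such a prefix `j, a` contributes `x^j y F_a` (prepending `j ≤ a` to a composition
starting with `a` creates no valley), so
`F = G + Σ_j x^j y F_a` and `F_a = x^a y G + Σ_j x^a y p d^{a-j} · x^j y F_a`;
eliminating `G` gives the functional equation.
-/

open MvPowerSeries Finsupp

lemma mem_symValleyIdx {L : List ℕ} {i : ℕ} : i ∈ symValleyIdx L ↔
    i + 2 < L.length ∧ L.getD (i + 1) 0 < L.getD i 0 ∧ L.getD i 0 = L.getD (i + 2) 0 := by
  simp only [symValleyIdx, Finset.mem_filter, Finset.mem_range, gt_iff_lt]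
  exact ⟨And.right, fun h => ⟨by omega, h⟩⟩

lemma succ_mem_symValleyIdx_cons {b i : ℕ} {L : List ℕ} :
    i + 1 ∈ symValleyIdx (b :: L) ↔ i ∈ symValleyIdx L := by
  simp only [mem_symValleyIdx, List.length_cons, List.getD_cons_succ]
  omega

lemma zero_mem_symValleyIdx_cons {b : ℕ} {L : List ℕ} :
    0 ∈ symValleyIdx (b :: L) ↔ ∃ j T, j < b ∧ L = j :: b :: T := by
  rcases L with _ | ⟨x, _ | ⟨y, T⟩⟩ <;> simp [mem_symValleyIdx]
  omega

lemma symValleyIdx_cons_of_not_exists {b : ℕ} {L : List ℕ}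
    (h : ¬ ∃ j T, j < b ∧ L = j :: b :: T) :
    symValleyIdx (b :: L) = (symValleyIdx L).map (addRightEmbedding 1) := by
  ext (_ | i)
  · simpa [zero_mem_symValleyIdx_cons] using h
  · simp [succ_mem_symValleyIdx_cons]

lemma symValleyIdx_cons_cons_cons {b j : ℕ} (T : List ℕ) (hj : j < b) :
    symValleyIdx (b :: j :: b :: T) =
      insert 0 ((symValleyIdx (j :: b :: T)).map (addRightEmbedding 1)) := by
  ext (_ | i)
  · simpa [zero_mem_symValleyIdx_cons] using hj
  · simp [succ_mem_symValleyIdx_cons]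

noncomputable def expVec (n k s t : ℕ) : Fin 4 →₀ ℕ :=
  single 0 n + single 1 k + single 2 s + single 3 t

noncomputable def listStat (L : List ℕ) : Fin 4 →₀ ℕ :=
  expVec L.sum L.length (svL L) (dsvL L)

lemma expVec_add_expVec (n k s t n' k' s' t' : ℕ) :
    expVec n k s t + expVec n' k' s' t' = expVec (n + n') (k + k') (s + s') (t + t') := by
  simp only [expVec, single_add]
  abel

lemma expVec_eq_iff {n k s t : ℕ} {m : Fin 4 →₀ ℕ} :
    expVec n k s t = m ↔ n = m 0 ∧ k = m 1 ∧ s = m 2 ∧ t = m 3 := by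
  simp [Finsupp.ext_iff, Fin.forall_fin_succ, expVec, single_apply]

lemma monomial_expVec (n k s t : ℕ) :
    monomial (expVec n k s t) (1 : ℚ) = Xv 0 ^ n * Xv 1 ^ k * Xv 2 ^ s * Xv 3 ^ t := by
  simp only [expVec, X_pow_eq, monomial_mul_monomial, one_mul]

lemma listStat_cons_of_not_exists {b : ℕ} {L : List ℕ}
    (h : ¬ ∃ j T, j < b ∧ L = j :: b :: T) :
    listStat (b :: L) = expVec b 1 0 0 + listStat L := by
  simp [listStat, svL, dsvL, symValleyIdx_cons_of_not_exists h, expVec_add_expVec, add_comm]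

lemma listStat_cons_cons_cons {b j : ℕ} (T : List ℕ) (hj : j < b) :
    listStat (b :: j :: b :: T) = expVec b 1 1 (b - j) + listStat (j :: b :: T) := by
  simp [listStat, svL, dsvL, symValleyIdx_cons_cons_cons T hj, expVec_add_expVec, add_comm]

lemma listStat_apply_zero (L : List ℕ) : listStat L 0 = L.sum := by
  simp [listStat, expVec]

def compsWithStat (m : Fin 4 →₀ ℕ) : Set (List ℕ) :=
  {L | (∀ x ∈ L, 0 < x) ∧ listStat L = m}

lemma finite_compsWithStat (m : Fin 4 →₀ ℕ) : (compsWithStat m).Finite :=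
  (Set.finite_range (Composition.blocks : Composition (m 0) → List ℕ)).subset
    fun L ⟨hpos, hL⟩ => ⟨⟨L, hpos _, by rw [← listStat_apply_zero, hL]⟩, rfl⟩

lemma card_filter_composition_blocks (n : ℕ) (P : List ℕ → Prop) [DecidablePred P] :
    (Finset.univ.filter (fun c : Composition n => P c.blocks)).card =
      {L : List ℕ | (∀ x ∈ L, 0 < x) ∧ L.sum = n ∧ P L}.ncard := by
  have himage : {L : List ℕ | (∀ x ∈ L, 0 < x) ∧ L.sum = n ∧ P L} =
      Composition.blocks ''
        ((Finset.univ.filter (fun c : Composition n => P c.blocks) : Finset _) :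
          Set (Composition n)) := by
    ext L
    simp only [Set.mem_ofPred_eq, Set.mem_image, Finset.coe_filter, Finset.mem_univ, true_and]
    refine ⟨fun ⟨hpos, hsum, hP⟩ => ⟨⟨L, hpos _, hsum⟩, hP, rfl⟩, ?_⟩
    rintro ⟨c, hP, rfl⟩
    exact ⟨fun _ => c.blocks_pos, c.blocks_sum, hP⟩
  rw [himage, Set.ncard_image_of_injective _ fun c d h => Composition.ext h, Set.ncard_coe_finset]

noncomputable def compGF (S : Set (List ℕ)) : MvPowerSeries (Fin 4) ℚ :=
  fun m => (S ∩ compsWithStat m).ncard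

lemma coeff_compGF (S : Set (List ℕ)) (m : Fin 4 →₀ ℕ) :
    coeff m (compGF S) = (S ∩ compsWithStat m).ncard := rfl

lemma compGF_union {S T : Set (List ℕ)} (h : Disjoint S T) :
    compGF (S ∪ T) = compGF S + compGF T := by
  ext m
  rw [map_add, coeff_compGF, coeff_compGF, coeff_compGF, Set.union_inter_distrib_right,
    Set.ncard_union_eq (h.mono Set.inter_subset_left Set.inter_subset_left)
      ((finite_compsWithStat m).inter_of_right S) ((finite_compsWithStat m).inter_of_right T),
    Nat.cast_add]

lemma compGF_biUnion {ι : Type*} (s : Finset ι) {S : ι → Set (List ℕ)}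
    (h : (s : Set ι).PairwiseDisjoint S) :
    compGF (⋃ i ∈ s, S i) = ∑ i ∈ s, compGF (S i) := by
  ext m
  have hdisj : (s : Set ι).PairwiseDisjoint (fun i => S i ∩ compsWithStat m) :=
    fun i hi j hj hij => (h hi hj hij).mono Set.inter_subset_left Set.inter_subset_left
  rw [map_sum, coeff_compGF, Set.iUnion₂_inter, ← Finset.set_biUnion_coe,
    s.finite_toSet.ncard_biUnion (fun i _ => (finite_compsWithStat m).inter_of_right (S i)) hdisj,
    finsum_mem_coe_finset, Nat.cast_sum]
  rfl

lemma compGF_image_cons {b : ℕ} (hb : 0 < b) {S : Set (List ℕ)} {e : Fin 4 →₀ ℕ}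
    (hS : ∀ L ∈ S, (∀ x ∈ L, 0 < x) → listStat (b :: L) = e + listStat L) :
    compGF (List.cons b '' S) = monomial e 1 * compGF S := by
  ext m
  have hpos_cons : ∀ L : List ℕ, (∀ x ∈ b :: L, 0 < x) ↔ ∀ x ∈ L, 0 < x := by
    simp [hb]
  have himage : List.cons b '' S ∩ compsWithStat m =
      List.cons b '' (S ∩ {L | (∀ x ∈ L, 0 < x) ∧ e + listStat L = m}) := by
    ext L'
    simp only [compsWithStat, Set.mem_inter_iff, Set.mem_image, Set.mem_ofPred_eq]
    constructor
    · rintro ⟨⟨L, hL, rfl⟩, hpos, hstat⟩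
      rw [hpos_cons] at hpos
      exact ⟨L, ⟨hL, hpos, hS L hL hpos ▸ hstat⟩, rfl⟩
    · rintro ⟨L, ⟨hL, hpos, hstat⟩, rfl⟩
      exact ⟨⟨L, hL, rfl⟩, (hpos_cons L).2 hpos, hS L hL hpos ▸ hstat⟩
  rw [coeff_monomial_mul, coeff_compGF, himage, Set.ncard_image_of_injective _ List.cons_injective]
  split_ifs with hem
  · simp_rw [one_mul, coeff_compGF, compsWithStat, eq_tsub_iff_add_eq_of_le hem, add_comm e]
  · suffices h : ∀ L, e + listStat L ≠ m by simp [h]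
    exact fun L hL => hem (hL ▸ le_self_add)

lemma Fdsv_eq_compGF : Fdsv = compGF Set.univ := by
  ext m
  rw [coeff_compGF, Set.univ_inter]
  refine congrArg Nat.cast ((card_filter_composition_blocks (m 0)
    fun L => L.length = m 1 ∧ svL L = m 2 ∧ dsvL L = m 3).trans (congrArg Set.ncard ?_))
  ext L
  simp only [compsWithStat, listStat, expVec_eq_iff, Set.mem_ofPred_eq]

lemma FdsvA_eq_compGF (a : ℕ) : FdsvA a = compGF (List.cons a '' Set.univ) := by
  ext m
  rw [coeff_compGF]
  refine congrArg Nat.cast ((card_filter_composition_blocks (m 0)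
    fun L => L.head? = some a ∧ L.length = m 1 ∧ svL L = m 2 ∧ dsvL L = m 3).trans
      (congrArg Set.ncard ?_))
  ext L
  simp only [compsWithStat, listStat, expVec_eq_iff, Set.mem_ofPred_eq, Set.mem_inter_iff,
    Set.image_univ, Set.mem_range, List.head?_eq_some_iff, eq_comm (a := L)]
  tauto

/-- For a composition `L`, `L ∈ valleyPrefixes a` means that `a :: L` has a symmetric valley at
its start. -/
def valleyPrefixes (a : ℕ) : Set (List ℕ) :=
  ⋃ j ∈ Finset.Icc 1 (a - 1), List.cons j '' (List.cons a '' Set.univ)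

lemma pairwiseDisjoint_image_cons (s : Set ℕ) (X : Set (List ℕ)) :
    s.PairwiseDisjoint fun j => List.cons j '' X :=
  fun _ _ _ _ hij => Set.disjoint_left.2 fun _ ⟨_, _, hT⟩ ⟨_, _, hT'⟩ =>
    hij (List.cons_eq_cons.1 (hT.trans hT'.symm)).1

lemma compGF_cons_image_cons {a j : ℕ} (hj : 0 < j) (hja : j ≤ a) :
    compGF (List.cons j '' (List.cons a '' Set.univ)) = Xv 0 ^ j * Xv 1 * FdsvA a := by
  rw [compGF_image_cons hj (e := expVec j 1 0 0), monomial_expVec, FdsvA_eq_compGF]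
  · simp
  rintro _ ⟨T, -, rfl⟩ -
  refine listStat_cons_of_not_exists ?_
  rintro ⟨i, T', hi, h⟩
  rw [List.cons_eq_cons] at h
  omega

lemma Fdsv_eq_compGF_compl_add (a : ℕ) :
    Fdsv = compGF (valleyPrefixes a)ᶜ
      + Xv 1 * (∑ j ∈ Finset.Icc 1 (a - 1), Xv 0 ^ j) * FdsvA a := by
  rw [Fdsv_eq_compGF, ← Set.compl_union_self (valleyPrefixes a), compGF_union disjoint_compl_left,
    valleyPrefixes, compGF_biUnion _ (pairwiseDisjoint_image_cons _ _), Finset.mul_sum,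
    Finset.sum_mul]
  refine congrArg _ (Finset.sum_congr rfl fun j hj => ?_)
  rw [Finset.mem_Icc] at hj
  rw [compGF_cons_image_cons (by omega) (by omega)]
  ring

lemma FdsvA_eq_compGF_compl_add {a : ℕ} (ha : 1 ≤ a) :
    FdsvA a = Xv 0 ^ a * Xv 1 * compGF (valleyPrefixes a)ᶜ
      + Xv 0 ^ a * Xv 1 ^ 2 * (∑ j ∈ Finset.Icc 1 (a - 1), Xv 0 ^ j * (Xv 2 * Xv 3 ^ (a - j)))
        * FdsvA a := by
  nth_rewrite 1 [FdsvA_eq_compGF]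
  rw [← Set.compl_union_self (valleyPrefixes a), Set.image_union,
    compGF_union ((Set.disjoint_image_iff List.cons_injective).2 disjoint_compl_left)]
  congr 1
  · rw [compGF_image_cons ha (e := expVec a 1 0 0), monomial_expVec]
    · simp
    intro L hL hpos
    refine listStat_cons_of_not_exists ?_
    rintro ⟨j, T, hj, rfl⟩
    have hj0 : 0 < j := hpos j List.mem_cons_self
    exact hL (Set.mem_biUnion (Finset.mem_Icc.2 ⟨hj0, by omega⟩) ⟨a :: T, ⟨T, trivial, rfl⟩, rfl⟩)
  · rw [valleyPrefixes, Set.image_iUnion₂, compGF_biUnion _ fun i hi j hj hij =>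
      (Set.disjoint_image_iff List.cons_injective).2 (pairwiseDisjoint_image_cons _ _ hi hj hij),
      Finset.mul_sum, Finset.sum_mul]
    refine Finset.sum_congr rfl fun j hj => ?_
    rw [Finset.mem_Icc] at hj
    rw [compGF_image_cons ha (e := expVec a 1 1 (a - j)), monomial_expVec,
      compGF_cons_image_cons (by omega) (by omega)]
    · ring
    rintro _ ⟨_, ⟨T, -, rfl⟩, rfl⟩ -
    exact listStat_cons_cons_cons T (by omega)

/-- `F_a · (1 − y²·x^a·Σ_{j=1}^{a−1} x^j·(p·d^{a−j} − 1)) = x^a·y·F`. -/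
theorem dsv_first_part_functional_equation (a : ℕ) (ha : 1 ≤ a) :
    FdsvA a * (1 - (Xv 1)^2 * (Xv 0)^a *
      ∑ j ∈ Finset.Icc 1 (a - 1), (Xv 0)^j * (Xv 2 * (Xv 3)^(a - j) - 1))
    = (Xv 0)^a * Xv 1 * Fdsv := by
  have hsum : ∑ j ∈ Finset.Icc 1 (a - 1), Xv 0 ^ j * (Xv 2 * Xv 3 ^ (a - j) - 1) =
      ∑ j ∈ Finset.Icc 1 (a - 1), Xv 0 ^ j * (Xv 2 * Xv 3 ^ (a - j))
        - ∑ j ∈ Finset.Icc 1 (a - 1), Xv 0 ^ j := by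
    simp only [mul_sub, mul_one, Finset.sum_sub_distrib]
  rw [hsum]
  linear_combination FdsvA_eq_compGF_compl_add ha - Xv 0 ^ a * Xv 1 * Fdsv_eq_compGF_compl_add a
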